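/- arXiv:2006.10221 — 3 statements merged into one kernel-verified Lean document; each statement's English description precedes it below -/
import Mathlib

section
/- Let (x_1, …, x_m) be a list of positive integers with each x_i < t and Σ_i x_i ≥ t. Then the list can be partitioned into consecutive-free groups (a partition of the index set) such that the sum of each group lies in the interval [t, 3t). -/
/-!
A subset `u` of the clusters that is minimal with `t ≤ ∑ u` has sum `< 2t`: removing any
cluster `i` from it drops the sum below `t`, and `x i < t`. While the total is at least `3t`,
peel off such a `u`; what remains still has sum at least `t`. Once the total is below `3t`,
the remaining clusters form the last group.
-/

open Finset

variable {ι : Type*} {x : ι → ℕ} {t : ℕ}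

lemma exists_subset_le_sum_lt_two_mul {s : Finset ι} (hlt : ∀ i ∈ s, x i < t)
    (hs : t ≤ ∑ i ∈ s, x i) (ht : 0 < t) :
    ∃ u ⊆ s, u.Nonempty ∧ t ≤ ∑ i ∈ u, x i ∧ ∑ i ∈ u, x i < 2 * t := by
  classical
  obtain ⟨u, hus, hu⟩ := exists_minimal_le_of_wellFoundedLT (fun u ↦ t ≤ ∑ i ∈ u, x i) s hs
  have hut : t ≤ ∑ i ∈ u, x i := hu.prop
  obtain ⟨i, hi⟩ : u.Nonempty := nonempty_of_sum_ne_zero (f := x) (by omega)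
  have herase : ∑ j ∈ u.erase i, x j < t :=
    not_le.mp fun h ↦ hu.not_lt h (erase_ssubset hi)
  have := add_sum_erase u x hi
  have := hlt i (hus hi)
  exact ⟨u, hus, ⟨i, hi⟩, hut, by omega⟩

lemma exists_finpartition_le_sum_lt_three_mul [DecidableEq ι] (s : Finset ι)
    (hlt : ∀ i ∈ s, x i < t) (hs : t ≤ ∑ i ∈ s, x i) :
    ∃ P : Finpartition s, ∀ g ∈ P.parts, t ≤ ∑ i ∈ g, x i ∧ ∑ i ∈ g, x i < 3 * t := by
  induction s using Finset.strongInduction with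
  | H s ih =>
    obtain rfl | ⟨j, hj⟩ := s.eq_empty_or_nonempty
    · exact ⟨Finpartition.empty _, by simp⟩
    by_cases hsmall : ∑ i ∈ s, x i < 3 * t
    · refine ⟨Finpartition.indiscrete (nonempty_iff_ne_empty.mp ⟨j, hj⟩), ?_⟩
      simpa using ⟨hs, hsmall⟩
    obtain ⟨u, hus, hune, hut, hu2t⟩ :=
      exists_subset_le_sum_lt_two_mul hlt hs (by have := hlt j hj; omega)
    have hsplit := sum_sdiff hus (f := x)
    obtain ⟨P, hP⟩ := ih (s \ u) (sdiff_ssubset hus hune)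
      (fun i hi ↦ hlt i (mem_sdiff.mp hi).1) (by omega)
    refine ⟨P.extend hune.ne_empty sdiff_disjoint (sdiff_union_of_subset hus), ?_⟩
    simp only [Finpartition.extend_parts, mem_insert, forall_eq_or_imp]
    exact ⟨⟨hut, by omega⟩, hP⟩

theorem stmt_10_general (m t : ℕ) (x : Fin m → ℕ)
    (hlt : ∀ i, x i < t) (hsum : t ≤ ∑ i, x i) :
    ∃ P : Finpartition (Finset.univ : Finset (Fin m)),
      ∀ g ∈ P.parts, t ≤ ∑ i ∈ g, x i ∧ ∑ i ∈ g, x i < 3 * t :=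
  exists_finpartition_le_sum_lt_three_mul univ (fun i _ ↦ hlt i) hsum

theorem stmt_10 (m t : ℕ) (x : Fin m → ℕ) (hpos : ∀ i, 0 < x i)
    (hlt : ∀ i, x i < t) (hsum : t ≤ ∑ i, x i) :
    ∃ P : Finpartition (Finset.univ : Finset (Fin m)),
      ∀ g ∈ P.parts, t ≤ ∑ i ∈ g, x i ∧ ∑ i ∈ g, x i < 3 * t :=
  stmt_10_general m t x hlt hsum
end

section
/- Let t ≥ 1 be an integer and P a finite set of colored points with |P| = p ≥ t, such that every color class of P has at most ⌊p/t⌋ elements. Then P can be partitioned into ⌊p/t⌋ parts, each of size at least t and less than 2t, such that each part contains at most one point of each color. -/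
/-!
Enumerate `P` by `0, …, p - 1` so that every color class occupies consecutive positions, and put
the point at position `i` into part `i mod m`, where `m = ⌊p / t⌋`. A color class has at most `m`
points, so its positions are distinct mod `m`; and since `m t ≤ p < (m + 1) t`, each residue class
mod `m` in `[0, p)` has at least `t` and fewer than `2t` elements.
-/

open Finset

namespace List

theorem idxOf_lt_idxOf_add_length_of_mem_flatMap {α β : Type*} [DecidableEq α]
    {f : β → List α} {b : β} {x y : α} :
    ∀ {l : List β}, (l.flatMap f).Nodup → b ∈ l → x ∈ f b → y ∈ f b →
      (l.flatMap f).idxOf y < (l.flatMap f).idxOf x + (f b).length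
  | a :: l, hnd, hb, hx, hy => by
    rw [flatMap_cons] at hnd ⊢
    rcases mem_cons.1 hb with rfl | hb
    · rw [idxOf_append_of_mem hy]
      exact (idxOf_lt_length_of_mem hy).trans_le (Nat.le_add_left _ _)
    · have hdisj := disjoint_of_nodup_append hnd
      have hxa : x ∉ f a := fun h => hdisj h (mem_flatMap.2 ⟨b, hb, hx⟩)
      have hya : y ∉ f a := fun h => hdisj h (mem_flatMap.2 ⟨b, hb, hy⟩)
      rw [idxOf_append_of_notMem hxa, idxOf_append_of_notMem hya]
      have := idxOf_lt_idxOf_add_length_of_mem_flatMap hnd.of_append_right hb hx hy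
      omega

end List

theorem Finset.exists_injOn_lt_card_fibers_consecutive {α C : Type*} [DecidableEq α]
    [DecidableEq C] (s : Finset α) (g : α → C) :
    ∃ pos : α → ℕ, Set.InjOn pos s ∧ (∀ x ∈ s, pos x < #s) ∧
      ∀ x ∈ s, ∀ y ∈ s, g x = g y → pos y < pos x + #{z ∈ s | g z = g x} := by
  set L := (s.image g).toList.flatMap fun c => ({z ∈ s | g z = c} : Finset α).toList
  have hmem : ∀ x, x ∈ L ↔ x ∈ s := fun x => by simpa [L] using fun hx => ⟨x, hx, rfl⟩
  have hnd : L.Nodup := by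
    refine List.nodup_flatMap.2 ⟨fun _ _ => nodup_toList _, ?_⟩
    refine (s.image g).nodup_toList.imp fun hne x hx hx' => hne ?_
    simp only [mem_toList, mem_filter] at hx hx'
    rw [← hx.2, hx'.2]
  have hlen : L.length = #s := by
    rw [← List.toFinset_card_of_nodup hnd]
    congr 1
    ext x
    simp [hmem]
  refine ⟨L.idxOf, fun x hx y _ h => (List.idxOf_inj ((hmem x).2 hx)).1 h,
    fun x hx => hlen ▸ List.idxOf_lt_length_of_mem ((hmem x).2 hx), fun x hx y hy hxy => ?_⟩
  rw [← length_toList]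
  exact List.idxOf_lt_idxOf_add_length_of_mem_flatMap hnd (by simpa using ⟨x, hx, rfl⟩)
    (by simpa using hx) (by simpa using ⟨hy, hxy.symm⟩)

namespace Nat

theorem le_count_modEq {n m t : ℕ} (hm : 0 < m) (h : m * t ≤ n) (v : ℕ) :
    t ≤ n.count (· ≡ v [MOD m]) := by
  rw [count_modEq_card _ hm]
  exact ((Nat.le_div_iff_mul_le hm).2 (by linarith)).trans (Nat.le_add_right _ _)

theorem count_modEq_mul_lt {n m : ℕ} (hm : 0 < m) (v : ℕ) :
    n.count (· ≡ v [MOD m]) * m < n + m := by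
  have := Nat.div_add_mod' n m
  rw [count_modEq_card _ hm]
  split_ifs with h
  · rw [add_mul]; omega
  · rw [add_zero]; have := Nat.mod_lt n hm; omega

theorem count_modEq_lt_two_mul {n m t : ℕ} (hm : 0 < m) (h : n < (m + 1) * t) (v : ℕ) :
    n.count (· ≡ v [MOD m]) < 2 * t := by
  have := count_modEq_mul_lt (n := n) hm v
  have ht : 1 ≤ t := Nat.pos_of_ne_zero (by rintro rfl; simp at h)
  by_contra! hle
  nlinarith [Nat.mul_le_mul_right m hle]

end Nat

namespace Finpartition

variable {α ι : Type*} [DecidableEq α] [DecidableEq ι]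

def fibers (s : Finset α) (f : α → ι) : Finpartition s where
  parts := (s.image f).image fun i => {x ∈ s | f x = i}
  supIndep := by
    rw [supIndep_iff_pairwiseDisjoint]
    rintro _ hp _ hq hpq
    simp only [coe_image, Set.mem_image, mem_coe] at hp hq
    obtain ⟨i, -, rfl⟩ := hp
    obtain ⟨j, -, rfl⟩ := hq
    exact disjoint_filter.2 fun x _ hi hj => hpq (by rw [← hi, ← hj])
  sup_parts := by
    ext x
    simp only [sup_image, mem_sup, Function.comp_apply, id, mem_filter]
    exact ⟨fun ⟨_, _, hx, _⟩ => hx, fun hx => ⟨x, hx, hx, rfl⟩⟩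
  bot_notMem := by
    simp only [bot_eq_empty, mem_image, filter_eq_empty_iff, not_exists, not_and]
    rintro _ ⟨x, hx, rfl⟩ h
    exact h hx rfl

theorem mem_fibers_parts {s : Finset α} {f : α → ι} {p : Finset α} :
    p ∈ (fibers s f).parts ↔ ∃ i ∈ s.image f, {x ∈ s | f x = i} = p :=
  mem_image

theorem card_fibers_parts (s : Finset α) (f : α → ι) :
    #(fibers s f).parts = #(s.image f) := by
  refine card_image_of_injOn fun i hi j _ hij => ?_
  obtain ⟨x, hx, rfl⟩ := mem_image.1 hi
  have : x ∈ {y ∈ s | f y = j} := hij ▸ mem_filter.2 ⟨hx, rfl⟩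
  exact (mem_filter.1 this).2

end Finpartition

namespace Finset

variable {α : Type*} {s : Finset α} {pos : α → ℕ}

theorem image_eq_range_card_of_injOn (hinj : Set.InjOn pos s) (hlt : ∀ x ∈ s, pos x < #s) :
    s.image pos = range #s :=
  eq_of_subset_of_card_le
    (fun _ hi => by obtain ⟨x, hx, rfl⟩ := mem_image.1 hi; simpa using hlt x hx)
    (by rw [card_image_of_injOn hinj, card_range])

theorem image_mod_eq_range_of_injOn (hinj : Set.InjOn pos s) (hlt : ∀ x ∈ s, pos x < #s)
    {m : ℕ} (hm : 0 < m) (hms : m ≤ #s) : s.image (pos · % m) = range m := by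
  rw [show (pos · % m) = (· % m) ∘ pos from rfl, ← image_image,
    image_eq_range_card_of_injOn hinj hlt]
  ext j
  simp only [mem_image, mem_range]
  exact ⟨fun ⟨i, _, hi⟩ => hi ▸ Nat.mod_lt i hm,
    fun hj => ⟨j, hj.trans_le hms, Nat.mod_eq_of_lt hj⟩⟩

theorem card_filter_mod_eq_count (hinj : Set.InjOn pos s) (hlt : ∀ x ∈ s, pos x < #s)
    {m j : ℕ} (hj : j < m) : #{x ∈ s | pos x % m = j} = (#s).count (· ≡ j [MOD m]) := by
  rw [Nat.count_eq_card_filter_range, ← image_eq_range_card_of_injOn hinj hlt, filter_image,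
    card_image_of_injOn (hinj.mono (filter_subset _ _))]
  simp only [Nat.ModEq, Nat.mod_eq_of_lt hj]

theorem card_filter_filter_mod_eq_le_one {C : Type*} [DecidableEq C] (hinj : Set.InjOn pos s)
    {g : α → C} {m : ℕ} (hclose : ∀ x ∈ s, ∀ y ∈ s, g x = g y → pos y < pos x + m)
    (j : ℕ) (c : C) : #{x ∈ {x ∈ s | pos x % m = j} | g x = c} ≤ 1 := by
  refine card_le_one.2 fun x hx y hy => ?_
  simp only [mem_filter] at hx hy
  have hxy := hclose x hx.1.1 y hy.1.1 (hx.2.trans hy.2.symm)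
  have hyx := hclose y hy.1.1 x hx.1.1 (hy.2.trans hx.2.symm)
  refine hinj hx.1.1 hy.1.1 (Nat.ModEq.eq_of_abs_lt (hx.1.2.trans hy.1.2.symm) ?_)
  rw [abs_sub_lt_iff]
  omega

end Finset

theorem stmt_11 {α C : Type*} [DecidableEq α] [DecidableEq C] (P : Finset α)
    (color : α → C) (t : ℕ) (ht : 1 ≤ t) (htp : t ≤ P.card)
    (hcol : ∀ c, (P.filter fun x => color x = c).card ≤ P.card / t) :
    ∃ Q : Finpartition P, Q.parts.card = P.card / t ∧
      ∀ p ∈ Q.parts, t ≤ p.card ∧ p.card < 2 * t ∧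
        ∀ c, (p.filter fun x => color x = c).card ≤ 1 := by
  obtain ⟨pos, hinj, hlt, hclose⟩ := P.exists_injOn_lt_card_fibers_consecutive color
  set m := #P / t
  have hm : 0 < m := Nat.div_pos htp ht
  have himage := image_mod_eq_range_of_injOn hinj hlt hm (Nat.div_le_self _ _)
  refine ⟨Finpartition.fibers P (pos · % m),
    by rw [Finpartition.card_fibers_parts, himage, card_range], ?_⟩
  rintro _ hp
  obtain ⟨j, hj, rfl⟩ := Finpartition.mem_fibers_parts.1 hp
  rw [himage, mem_range] at hj
  rw [card_filter_mod_eq_count hinj hlt hj]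
  refine ⟨Nat.le_count_modEq hm (Nat.div_mul_le_self _ _) j,
    Nat.count_modEq_lt_two_mul hm (Nat.lt_mul_of_div_lt (Nat.lt_succ_self m) ht) j,
    card_filter_filter_mod_eq_le_one hinj (fun x hx y hy hxy => ?_) j⟩
  exact (hclose x hx y hy hxy).trans_le (Nat.add_le_add_left (hcol (color x)) _)
end

section
/- Let s : V × V → ℝ≥0 be a symmetric similarity on a finite set V, let 𝒴 = {Y_1, …, Y_k} be a partition of V with n = |V| and max_i |Y_i| = m_f ≤ n/2 with n ≥ 2, and suppose R ≥ β·Σ_{i<j} s(Y_i,Y_j)·(n − |Y_i| − |Y_j|) for some 0 ≤ β ≤ 1, where s(A,B) = Σ_{a∈A,b∈B} s(a,b). Then Σ_i β·(n − |Y_i|)·s(Y_i) + R ≥ β·(1 − 2m_f/n)·(n − 2)·s(V), where s(Y) = Σ_{{u,v}⊆Y} s(u,v) and s(V) = Σ_{{u,v}⊆V} s(u,v). -/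
/-- Sum of similarities over unordered pairs within a finite set. -/
noncomputable def pairSum {α : Type*} [DecidableEq α] (s : α → α → ℝ) (Y : Finset α) : ℝ :=
  (∑ p ∈ Y.offDiag, s p.1 p.2) / 2

/-- Sum of similarities between two sets. -/
noncomputable def crossSum {α : Type*} (s : α → α → ℝ) (A B : Finset α) : ℝ :=
  ∑ a ∈ A, ∑ b ∈ B, s a b

/-! The weight `n - |Y_i|` of a part and the weight `n - |Y_i| - |Y_j|` of a pair of parts are
both at least `n - 2 m_f`, so the left-hand side dominates `β (n - 2 m_f)` times
`∑ᵢ s(Yᵢ) + ½ ∑_{i ≠ j} s(Yᵢ, Yⱼ) = s(V)`; finally `(1 - 2 m_f / n)(n - 2) ≤ n - 2 m_f`. -/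

open Finset

theorem Finset.sum_offDiag_add_sum_diag {ι M : Type*} [DecidableEq ι] [AddCommMonoid M]
    (s : Finset ι) (f : ι → ι → M) :
    ∑ p ∈ s.offDiag, f p.1 p.2 + ∑ i ∈ s, f i i = ∑ i ∈ s, ∑ j ∈ s, f i j := by
  rw [add_comm, ← sum_diag s (fun p => f p.1 p.2), ← sum_union (disjoint_diag_offDiag s),
    diag_union_offDiag, sum_product]

theorem Finpartition.sum_sum_parts {ι M : Type*} [DecidableEq ι] [AddCommMonoid M]
    {S : Finset ι} (P : Finpartition S) (f : ι → M) :
    ∑ A ∈ P.parts, ∑ i ∈ A, f i = ∑ i ∈ S, f i := by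
  simpa only [P.biUnion_parts, id] using (sum_biUnion (f := f) P.supIndep.pairwiseDisjoint).symm

section Similarity

variable {α : Type*} (s : α → α → ℝ)

theorem pairSum_nonneg [DecidableEq α] (hs : ∀ u v, 0 ≤ s u v) (Y : Finset α) :
    0 ≤ pairSum s Y :=
  div_nonneg (sum_nonneg fun _ _ => hs _ _) zero_le_two

theorem crossSum_nonneg (hs : ∀ u v, 0 ≤ s u v) (A B : Finset α) : 0 ≤ crossSum s A B :=
  sum_nonneg fun _ _ => sum_nonneg fun _ _ => hs _ _

theorem crossSum_self [DecidableEq α] (A : Finset α) :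
    crossSum s A A = 2 * pairSum s A + ∑ u ∈ A, s u u := by
  rw [crossSum, pairSum, ← sum_offDiag_add_sum_diag]
  ring

theorem sum_sum_crossSum_parts {S : Finset α} [DecidableEq α] (P : Finpartition S) :
    ∑ A ∈ P.parts, ∑ B ∈ P.parts, crossSum s A B = crossSum s S S := by
  rw [crossSum, ← P.sum_sum_parts]
  refine sum_congr rfl fun A _ => ?_
  rw [sum_comm, ← P.sum_sum_parts]
  exact sum_congr rfl fun B _ => sum_comm

theorem pairSum_eq_sum_pairSum_parts_add {S : Finset α} [DecidableEq α] (P : Finpartition S) :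
    pairSum s S = ∑ Y ∈ P.parts, pairSum s Y +
      (1 / 2) * ∑ p ∈ P.parts.offDiag, crossSum s p.1 p.2 := by
  have hS := crossSum_self s S
  rw [← sum_sum_crossSum_parts s P, ← sum_offDiag_add_sum_diag, sum_congr rfl fun A _ =>
    crossSum_self s A, sum_add_distrib, ← mul_sum, P.sum_sum_parts] at hS
  linarith

end Similarity

theorem one_sub_div_mul_sub_le_sub {n a c : ℝ} (hn : 0 < n) (ha : a ≤ n) (hc : 0 ≤ c) :
    (1 - a / n) * (n - c) ≤ n - a := by
  rw [one_sub_div hn.ne', div_mul_eq_mul_div, div_le_iff₀ hn]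
  nlinarith [mul_nonneg (sub_nonneg.mpr ha) hc]

theorem stmt_14_general {α : Type*} [Fintype α] [DecidableEq α] (s : α → α → ℝ)
    (hnn : ∀ u v, 0 ≤ s u v)
    (P : Finpartition (Finset.univ : Finset α))
    (n : ℝ) (hn2 : 2 ≤ n)
    (mf : ℕ) (hmf : mf = P.parts.sup Finset.card) (hmf2 : (mf : ℝ) ≤ n / 2)
    (β : ℝ) (hβ0 : 0 ≤ β) (R : ℝ)
    (hR : R ≥ β * ((1 / 2) *
      ∑ p ∈ P.parts.offDiag, crossSum s p.1 p.2 * (n - p.1.card - p.2.card))) :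
    ∑ Y ∈ P.parts, β * (n - Y.card) * pairSum s Y + R ≥
      β * (1 - 2 * mf / n) * (n - 2) * pairSum s Finset.univ := by
  have hcard : ∀ Y ∈ P.parts, (Y.card : ℝ) ≤ mf := fun Y hY => by
    rw [hmf]; exact_mod_cast le_sup hY
  have hmf0 : (0 : ℝ) ≤ mf := mf.cast_nonneg
  calc β * (1 - 2 * mf / n) * (n - 2) * pairSum s univ
      ≤ β * (n - 2 * mf) * pairSum s univ := by
        rw [mul_assoc β]
        gcongr
        · exact pairSum_nonneg s hnn _
        · exact one_sub_div_mul_sub_le_sub (by linarith) (by linarith) zero_le_two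
    _ = ∑ Y ∈ P.parts, β * (n - 2 * mf) * pairSum s Y +
          β * ((1 / 2) * ∑ p ∈ P.parts.offDiag, crossSum s p.1 p.2 * (n - 2 * mf)) := by
        rw [pairSum_eq_sum_pairSum_parts_add s P, ← mul_sum, ← sum_mul]
        ring
    _ ≤ ∑ Y ∈ P.parts, β * (n - Y.card) * pairSum s Y + R := by
      refine add_le_add (sum_le_sum fun Y hY => ?_) (le_trans ?_ hR)
      · have := hcard Y hY
        gcongr
        · exact pairSum_nonneg s hnn Y
        · linarith
      · refine mul_le_mul_of_nonneg_left (mul_le_mul_of_nonneg_left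
          (sum_le_sum fun p hp => ?_) one_half_pos.le) hβ0
        have := hcard p.1 (mem_offDiag.mp hp).1
        have := hcard p.2 (mem_offDiag.mp hp).2.1
        exact mul_le_mul_of_nonneg_left (by linarith) (crossSum_nonneg s hnn _ _)

theorem stmt_14 {α : Type*} [Fintype α] [DecidableEq α] (s : α → α → ℝ)
    (hsymm : ∀ u v, s u v = s v u) (hnn : ∀ u v, 0 ≤ s u v)
    (P : Finpartition (Finset.univ : Finset α))
    (n : ℝ) (hn : n = Fintype.card α) (hn2 : 2 ≤ n)
    (mf : ℕ) (hmf : mf = P.parts.sup Finset.card) (hmf2 : (mf : ℝ) ≤ n / 2)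
    (β : ℝ) (hβ0 : 0 ≤ β) (hβ1 : β ≤ 1) (R : ℝ)
    (hR : R ≥ β * ((1 / 2) *
      ∑ p ∈ P.parts.offDiag, crossSum s p.1 p.2 * (n - p.1.card - p.2.card))) :
    ∑ Y ∈ P.parts, β * (n - Y.card) * pairSum s Y + R ≥
      β * (1 - 2 * mf / n) * (n - 2) * pairSum s Finset.univ :=
  stmt_14_general s hnn P n hn2 mf hmf hmf2 β hβ0 R hR
end
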